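/- Suppose n ≫ r, α ∈ (1,2), and b₁, b₂ are constants with 0 < b₁ < b₂ and b₁/b₂ ∈ ((2^{r−1}−1)/2^{r−1}, 1). Then the deterministic design 𝒥_{n,α} := ⋃_{d=b₁M_α}^{b₂M_α} ⋃_{i=1}^n 𝒜_{i,d}^{n,r} (with M_α := ⌊n^{α−1}⌋) satisfies: (i) a_{n,α;1}(i) ≍ M_α uniformly over i ∈ {1,…,n}; (ii) a_{n,α;k}(I_k) ∈ {0,1} for every k ≥ 2 and every I_k ∈ 𝒞_n^k; and (iii) Σ_{I_k∈𝒞_n^k} a_{n,α;k}(I_k)² ≍ n^{α+(α−k)∨0} for every k ∈ {1,…,r}. -/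

import Mathlib

open MeasureTheory ProbabilityTheory Finset Filter

namespace UStat

variable {Ω S : Type*} [MeasurableSpace Ω] [MeasurableSpace S]
variable {ι : Type*} [Fintype ι]

/-- Standard normal density. -/
noncomputable def gpdf (u : ℝ) : ℝ := (Real.sqrt (2 * Real.pi))⁻¹ * Real.exp (-(u ^ 2) / 2)

/-- Standard normal CDF. -/
noncomputable def gcdf (u : ℝ) : ℝ := ∫ t in Set.Iic u, gpdf t

/-- Hermite polynomial `H_k` evaluated at a real number. -/
noncomputable def hermiteEval (k : ℕ) (u : ℝ) : ℝ := Polynomial.aeval u (Polynomial.hermite k)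

/-- CDF of a real random variable. -/
noncomputable def rcdf (P : Measure Ω) (T : Ω → ℝ) (u : ℝ) : ℝ := (P {ω | T ω ≤ u}).toReal

/-- the rate `n^{-α/2} (log n)^{1/2}`. -/
noncomputable def ratefn (α : ℝ) (n : ℕ) : ℝ := (n : ℝ) ^ (-(α / 2)) * Real.sqrt (Real.log n)

/-- The sequence `X` is i.i.d. under `P`. -/
def IsIID (P : Measure Ω) (X : ℕ → Ω → S) : Prop :=
  (∀ i, Measurable (X i)) ∧ iIndepFun X P ∧
    ∀ i, IdentDistrib (X i) (X 0) P P

/-- `E[h(x₁,…,x_k, X_{k+1},…,X_r)]`: the kernel mean with the first `k` coordinates frozen. -/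
noncomputable def hbar (P : Measure Ω) {r : ℕ} (h : (Fin r → S) → ℝ) (X : ℕ → Ω → S)
    (k : ℕ) (x : Fin k → S) : ℝ :=
  ∫ ω, h (fun j => if hj : (j : ℕ) < k then x ⟨(j : ℕ), hj⟩ else X (j : ℕ) ω) ∂P

/-- `g` is the family of Hoeffding projections of the kernel `h`. -/
def IsHoeffding (P : Measure Ω) {r : ℕ} (h : (Fin r → S) → ℝ) (X : ℕ → Ω → S)
    (μ : ℝ) (g : (k : ℕ) → (Fin k → S) → ℝ) : Prop :=
  (∀ x : Fin 1 → S, g 1 x = hbar P h X 1 x - μ) ∧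
    ∀ k : ℕ, 2 ≤ k → ∀ x : Fin k → S,
      g k x = hbar P h X k x - μ -
        ∑ k' ∈ Finset.Ico 1 k,
          ∑ I ∈ ((Finset.univ : Finset (Fin k)).powersetCard k').attach,
            g k' fun j => x (I.1.orderEmbOfFin (Finset.mem_powersetCard.mp I.2).2 j)

/-- `ξ_k² = Var(g_k(X₁,…,X_k))`. -/
noncomputable def xiSq (P : Measure Ω) (g : (k : ℕ) → (Fin k → S) → ℝ)
    (X : ℕ → Ω → S) (k : ℕ) : ℝ :=
  variance (fun ω => g k fun j => X (j : ℕ) ω) P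

/-- number of design entries containing `I` (with multiplicity): `a_{n,α;k}(I)`. -/
def acount (J : ι → Finset ℕ) (I : Finset ℕ) : ℕ :=
  (Finset.univ.filter fun j => I ⊆ J j).card

/-- design entries are `r`-subsets of `{0,…,n−1}`. -/
def IsDesign (n r : ℕ) (J : ι → Finset ℕ) : Prop :=
  ∀ j, J j ⊆ Finset.range n ∧ (J j).card = r

/-- kernel applied at an index set (via the order isomorphism). -/
noncomputable def kernelOn {r : ℕ} (h : (Fin r → S) → ℝ) (X : ℕ → Ω → S)
    (I : Finset ℕ) (ω : Ω) : ℝ :=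
  if hI : I.card = r then h fun j => X (I.orderEmbOfFin hI j) ω else 0

/-- projection `g_k` applied at an index set. -/
noncomputable def projOn (g : (k : ℕ) → (Fin k → S) → ℝ) (X : ℕ → Ω → S)
    (k : ℕ) (I : Finset ℕ) (ω : Ω) : ℝ :=
  if hI : I.card = k then g k fun j => X (I.orderEmbOfFin hI j) ω else 0

/-- incomplete U-statistic with design `J`. -/
noncomputable def UJ {r : ℕ} (h : (Fin r → S) → ℝ) (X : ℕ → Ω → S)
    (J : ι → Finset ℕ) (ω : Ω) : ℝ :=
  (Fintype.card ι : ℝ)⁻¹ * ∑ j, kernelOn h X (J j) ω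

/-- complete U-statistic. -/
noncomputable def Ucomp (n : ℕ) {r : ℕ} (h : (Fin r → S) → ℝ) (X : ℕ → Ω → S) (ω : Ω) : ℝ :=
  (n.choose r : ℝ)⁻¹ * ∑ I ∈ (Finset.range n).powersetCard r, kernelOn h X I ω

/-- `σ̃_h²`. -/
noncomputable def sigTSq {r : ℕ} (h : (Fin r → S) → ℝ) (X : ℕ → Ω → S)
    (J : ι → Finset ℕ) (ω : Ω) : ℝ :=
  (Fintype.card ι : ℝ)⁻¹ * ∑ j, (kernelOn h X (J j) ω - UJ h X J ω) ^ 2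

/-- `ν̃_h³`. -/
noncomputable def nuT3 {r : ℕ} (h : (Fin r → S) → ℝ) (X : ℕ → Ω → S)
    (J : ι → Finset ℕ) (ω : Ω) : ℝ :=
  (Fintype.card ι : ℝ)⁻¹ * ∑ j, (kernelOn h X (J j) ω - UJ h X J ω) ^ 3

/-- representative of `z` modulo `n` in `{0,…,n−1}`. -/
def idxMod (n : ℕ) (z : ℤ) : ℤ := z % (n : ℤ)

/-- kernel on the arithmetic progression `X_{[i:d:(i+(r−1)d)]}` (indices mod `n`). -/
noncomputable def apK {r : ℕ} (h : (Fin r → S) → ℝ) (X : ℕ → Ω → S)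
    (n : ℕ) (i d : ℤ) (ω : Ω) : ℝ :=
  h fun ℓ : Fin r => X (idxMod n (i + ((ℓ : ℕ) : ℤ) * d)).toNat ω

/-- `⌊n^{α−1}⌋`. -/
noncomputable def mfl (α : ℝ) (n : ℕ) : ℕ := ⌊(n : ℝ) ^ (α - 1)⌋₊

/-- `μ̃²`. -/
noncomputable def muT2 {r : ℕ} (h : (Fin r → S) → ℝ) (X : ℕ → Ω → S)
    (α : ℝ) (n : ℕ) (ω : Ω) : ℝ :=
  (n : ℝ) ^ (-α) * ∑ i ∈ Finset.range n, ∑ d ∈ Finset.Icc 1 (mfl α n),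
    apK h X n (i : ℤ) (d : ℤ) ω * apK h X n ((i : ℤ) + (r : ℤ) * (d : ℤ)) (d : ℤ) ω

/-- the variance estimator `ξ̃₁²`. -/
noncomputable def xiT1Sq {r : ℕ} (h : (Fin r → S) → ℝ) (X : ℕ → Ω → S)
    (α : ℝ) (n : ℕ) (ω : Ω) : ℝ :=
  (n : ℝ) ^ (-α) * ∑ i ∈ Finset.range n, ∑ d ∈ Finset.Icc 1 (mfl α n),
      apK h X n (i : ℤ) (d : ℤ) ω * apK h X n (i : ℤ) (-(d : ℤ)) ω
    - muT2 h X α n ω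

/-- the plug-in estimator `Ẽ[g₁³]`. -/
noncomputable def Eg13T {r : ℕ} (h : (Fin r → S) → ℝ) (X : ℕ → Ω → S)
    (α : ℝ) (n : ℕ) (ω : Ω) : ℝ :=
  (n : ℝ)⁻¹ * ∑ i ∈ Finset.range n,
      apK h X n (i : ℤ) 1 ω *
        (h fun ℓ : Fin r => X (idxMod n ((i : ℤ) +
            if (ℓ : ℕ) = 0 then 0 else (r : ℤ) + ((ℓ : ℕ) : ℤ) - 1)).toNat ω) *
        (h fun ℓ : Fin r => X (idxMod n ((i : ℤ) +
            if (ℓ : ℕ) = 0 then 0 else 2 * (r : ℤ) + ((ℓ : ℕ) : ℤ) - 2)).toNat ω)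
    - Real.sqrt (muT2 h X α n ω) ^ 3

/-- the plug-in estimator `Ẽ[g₁g₁g₂]`. -/
noncomputable def Eg112T {r : ℕ} (h : (Fin r → S) → ℝ) (X : ℕ → Ω → S)
    (α : ℝ) (n : ℕ) (J : ι → Finset ℕ) (ω : Ω) : ℝ :=
  (n : ℝ)⁻¹ * ∑ i ∈ Finset.range n,
      apK h X n ((i : ℤ) - (r : ℤ) + 1) 1 ω * apK h X n (i : ℤ) 1 ω *
        apK h X n ((i : ℤ) + (r : ℤ) - 1) 1 ω
    - Real.sqrt (muT2 h X α n ω) ^ 3 - 2 * UJ h X J ω * xiT1Sq h X α n ω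

/-- the recursion defining the plug-in estimators `ξ̃_k²`. -/
def IsXiT {r : ℕ} (h : (Fin r → S) → ℝ) (X : ℕ → Ω → S) (α : ℝ)
    (xit : ℕ → ℕ → Ω → ℝ) : Prop :=
  ∀ k, 1 ≤ k → k ≤ r → ∀ (n : ℕ) (ω : Ω),
    xit k n ω =
      (n : ℝ) ^ (-α) * ∑ i ∈ Finset.range n, ∑ d ∈ Finset.Icc 1 (mfl α n),
          apK h X n (i : ℤ) (d : ℤ) ω *
            apK h X n ((i : ℤ) + ((k : ℤ) - 1) * (d : ℤ)) (-(d : ℤ)) ω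
        - muT2 h X α n ω - ∑ k' ∈ Finset.Ico 1 k, (k.choose k' : ℝ) * xit k' n ω

/-- `M_α := |J|⁻¹ Σᵢ a₁(i)²`. -/
noncomputable def MalphaJ (n : ℕ) (J : ι → Finset ℕ) : ℝ :=
  (Fintype.card ι : ℝ)⁻¹ * ∑ i ∈ Finset.range n, (acount J {i} : ℝ) ^ 2

noncomputable def sum1 (n : ℕ) (J : ι → Finset ℕ) : ℝ :=
  ∑ i ∈ Finset.range n, (acount J {i} : ℝ)

noncomputable def sum2 (n : ℕ) (J : ι → Finset ℕ) : ℝ :=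
  ∑ i ∈ Finset.range n, (acount J {i} : ℝ) ^ 2

noncomputable def sum3 (n : ℕ) (J : ι → Finset ℕ) : ℝ :=
  ∑ i ∈ Finset.range n, (acount J {i} : ℝ) ^ 3

noncomputable def sum12 (n : ℕ) (J : ι → Finset ℕ) : ℝ :=
  ∑ p ∈ (Finset.range n ×ˢ Finset.range n).filter (fun p => p.1 < p.2),
    (acount J {p.1} : ℝ) * (acount J {p.2} : ℝ) * (acount J {p.1, p.2} : ℝ)

/-- the disjoint-tuple coefficient sum appearing in the ℓ-th Edgeworth correction term. -/
noncomputable def DSum (r n : ℕ) (J : ι → Finset ℕ) (ξsq : ℕ → ℝ) (ℓ : ℕ) : ℝ :=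
  ∑ kv ∈ Fintype.piFinset (fun _ : Fin ℓ => Finset.Icc 2 r),
    ∑ Iv ∈ (Fintype.piFinset fun t : Fin ℓ => (Finset.range n).powersetCard (kv t)).filter
        (fun Iv => ∀ t t' : Fin ℓ, t ≠ t' → Disjoint (Iv t) (Iv t')),
      ∏ t : Fin ℓ, (acount J (Iv t) : ℝ) ^ 2 * ξsq (kv t)

/-- the `1/√n`-order Edgeworth coefficient `Γ₀`. -/
noncomputable def Gamma0 (r n : ℕ) (J : ι → Finset ℕ)
    (ξ1sq Eg13 Eg112 : ℝ) (u : ℝ) : ℝ :=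
  Real.sqrt n *
    ((-(sum3 n J) * (u ^ 2 - 1) / (6 * Real.sqrt ξ1sq ^ 3 * Real.sqrt (sum2 n J) ^ 3) +
          sum1 n J * u ^ 2 / (2 * Real.sqrt (sum2 n J) * n * Real.sqrt ξ1sq ^ 3)) * Eg13 +
      (-(sum12 n J) * (u ^ 2 - 1) / (Real.sqrt (sum2 n J) ^ 3 * Real.sqrt ξ1sq ^ 3) +
          ((r : ℝ) - 1) * sum1 n J * u ^ 2 /
            (Real.sqrt (sum2 n J) * n * Real.sqrt ξ1sq ^ 3)) * Eg112)

/-- the `M_α^{-ℓ}`-order Edgeworth coefficient `Γ_ℓ`, `ℓ ≥ 1`. -/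
noncomputable def GammaL (r n : ℕ) (J : ι → Finset ℕ) (ξ1sq : ℝ) (ξsq : ℕ → ℝ)
    (ℓ : ℕ) (u : ℝ) : ℝ :=
  -(MalphaJ n J ^ ℓ) * hermiteEval (2 * ℓ - 1) u /
      (((2 * ℓ).factorial : ℝ) * sum2 n J ^ ℓ * ξ1sq ^ ℓ) * DSum r n J ξsq ℓ

/-- the number `L := ⌊(α/2)/(α−1)⌋` of Edgeworth correction terms. -/
noncomputable def Lfl (α : ℝ) : ℕ := ⌊(α / 2) / (α - 1)⌋₊

/-- the population Edgeworth expansion `G_{𝒥_{n,α}}`. -/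
noncomputable def EdgeG (r n : ℕ) (α : ℝ) (J : ι → Finset ℕ)
    (ξ1sq Eg13 Eg112 : ℝ) (ξsq : ℕ → ℝ) (u : ℝ) : ℝ :=
  gcdf u + gpdf u *
    (Gamma0 r n J ξ1sq Eg13 Eg112 u / Real.sqrt n +
      ∑ ℓ ∈ Finset.Icc 1 (Lfl α), GammaL r n J ξ1sq ξsq ℓ u / MalphaJ n J ^ ℓ)

/-- the Cornish–Fisher expansion built from a family `Ψ`. -/
noncomputable def CFexp (n : ℕ) (J : ι → Finset ℕ) (α : ℝ) (Ψ : ℕ → ℝ → ℝ) (z : ℝ) : ℝ :=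
  z - Ψ 0 z / Real.sqrt n + ∑ ℓ ∈ Finset.Icc 1 (Lfl α), Ψ ℓ z / MalphaJ n J ^ ℓ

/-- the studentized incomplete U-statistic `T_J`. -/
noncomputable def TJ {r : ℕ} (h : (Fin r → S) → ℝ) (X : ℕ → Ω → S)
    (α : ℝ) (μ : ℝ) (n : ℕ) (J : ι → Finset ℕ) (ω : Ω) : ℝ :=
  (UJ h X J ω - μ) /
    ((Fintype.card ι : ℝ)⁻¹ * Real.sqrt (sum2 n J) * Real.sqrt (xiT1Sq h X α n ω))

/-- `δ` is a Gaussian smoother with variance `v`, independent of the data `X`. -/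
def IsSmoother (P : Measure Ω) (X : ℕ → Ω → S) (δ : Ω → ℝ) (v : ℝ) : Prop :=
  Measurable δ ∧ Measure.map δ P = gaussianReal 0 (Real.toNNReal v) ∧
    IndepFun δ (fun ω i => X i ω) P

/-- Assumption 2 of the paper, with explicit constants. -/
def Assumption2 (r : ℕ) (α : ℝ) (C₂ C₃ c₄ c₅ : ℝ) (n : ℕ) (J : ι → Finset ℕ) : Prop :=
  (∀ k ∈ Finset.Icc 1 r, ∀ I ∈ (Finset.range n).powersetCard k,
    ((k : ℝ) < α → C₂ * (n : ℝ) ^ (α - k) ≤ (acount J I : ℝ) ∧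
        (acount J I : ℝ) ≤ C₃ * (n : ℝ) ^ (α - k)) ∧
    ((k : ℝ) = α → (acount J I : ℝ) ≤ C₃ * Real.log n) ∧
    (α < (k : ℝ) → (acount J I : ℝ) ≤ C₃)) ∧
  ∀ k ∈ Finset.Icc 1 r,
    c₄ * (n : ℝ) ^ (α + max (α - k) 0) ≤
        (∑ I ∈ (Finset.range n).powersetCard k, (acount J I : ℝ) ^ 2) ∧
      (∑ I ∈ (Finset.range n).powersetCard k, (acount J I : ℝ) ^ 2) ≤
        c₅ * (n : ℝ) ^ (α + max (α - k) 0)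

/-- scheme (J1): i.i.d. uniform sampling with replacement from `𝒞_n^r`. -/
def LawJ1 (P : Measure Ω) (n r : ℕ) {N : ℕ} (J : Ω → Fin N → Finset ℕ) : Prop :=
  (∀ f : Fin N → Finset ℕ, (∀ j, f j ∈ (Finset.range n).powersetCard r) →
      P {ω | J ω = f} = ENNReal.ofReal (((n.choose r : ℝ) ^ N)⁻¹)) ∧
    P {ω | ∀ j, J ω j ∈ (Finset.range n).powersetCard r} = 1

/-- scheme (J2): uniform sampling without replacement from `𝒞_n^r`. -/
def LawJ2 (P : Measure Ω) (n r : ℕ) {N : ℕ} (J : Ω → Fin N → Finset ℕ) : Prop :=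
  (∀ f : Fin N → Finset ℕ, (∀ j, f j ∈ (Finset.range n).powersetCard r) →
      Function.Injective f →
      P {ω | J ω = f} = ENNReal.ofReal (((n.choose r).descFactorial N : ℝ))⁻¹) ∧
    P {ω | (∀ j, J ω j ∈ (Finset.range n).powersetCard r) ∧
        Function.Injective (J ω)} = 1

/-- scheme (J3): stratified uniform sampling with replacement; stratum of entry `j` is `j / m`. -/
def LawJ3 (P : Measure Ω) (n r m : ℕ) {N : ℕ} (J : Ω → Fin N → Finset ℕ) : Prop :=
  (∀ f : Fin N → Finset ℕ,
      (∀ j, f j ∈ (Finset.range n).powersetCard r ∧ (j : ℕ) / m ∈ f j) →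
      P {ω | J ω = f} = ENNReal.ofReal ((((n - 1).choose (r - 1) : ℝ) ^ N)⁻¹)) ∧
    P {ω | ∀ j, J ω j ∈ (Finset.range n).powersetCard r ∧ (j : ℕ) / m ∈ J ω j} = 1

/-- scheme (J4): stratified uniform sampling without replacement within each stratum. -/
def LawJ4 (P : Measure Ω) (n r m : ℕ) {N : ℕ} (J : Ω → Fin N → Finset ℕ) : Prop :=
  (∀ f : Fin N → Finset ℕ,
      (∀ j, f j ∈ (Finset.range n).powersetCard r ∧ (j : ℕ) / m ∈ f j) →
      (∀ j j' : Fin N, (j : ℕ) / m = (j' : ℕ) / m → f j = f j' → j = j') →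
      P {ω | J ω = f} =
        ENNReal.ofReal (((((n - 1).choose (r - 1)).descFactorial m : ℝ) ^ n)⁻¹)) ∧
    P {ω | (∀ j, J ω j ∈ (Finset.range n).powersetCard r ∧ (j : ℕ) / m ∈ J ω j) ∧
        ∀ j j' : Fin N, (j : ℕ) / m = (j' : ℕ) / m → J ω j = J ω j' → j = j'} = 1

/-- the deterministic arithmetic-progression design of Section 2.2.1 (`𝒜_{i,d}^{n,r}`). -/
def apDesign (r n : ℕ) (D : Finset ℕ) : Fin n × {d // d ∈ D} → Finset ℕ :=
  fun p => Finset.image (fun k : Fin r => ((p.1 : ℕ) + (2 ^ (k : ℕ) - 1) * (p.2 : ℕ)) % n)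
    Finset.univ

/-- the range of the progression gap `d`: `{⌈b₁M_α⌉,…,⌊b₂M_α⌋}`. -/
noncomputable def Drange (α b₁ b₂ : ℝ) (n : ℕ) : Finset ℕ :=
  Finset.Icc ⌈b₁ * (mfl α n : ℝ)⌉₊ ⌊b₂ * (mfl α n : ℝ)⌋₊

/-- `Ξ := Σ_{k=2}^r C(r,k) ξ_k²`. -/
noncomputable def XiSum (r : ℕ) (ξsq : ℕ → ℝ) : ℝ :=
  ∑ k ∈ Finset.Icc 2 r, (r.choose k : ℝ) * ξsq k

/-- `E_J[Γ₀]` under scheme (J1). -/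
noncomputable def EJGamma0J1 (r : ℕ) (ξ1sq Eg13 Eg112 : ℝ) (u : ℝ) : ℝ :=
  (2 * u ^ 2 + 1) / (6 * Real.sqrt ξ1sq ^ 3) * Eg13 +
    ((r : ℝ) - 1) * (u ^ 2 + 1) / (2 * Real.sqrt ξ1sq ^ 3) * Eg112

/-- `E_J[Γ₀]` under scheme (J3). -/
noncomputable def EJGamma0J3 (r : ℕ) (ξ1sq Eg13 Eg112 : ℝ) (u : ℝ) : ℝ :=
  (2 * u ^ 2 + 1) / (6 * Real.sqrt ξ1sq ^ 3) * Eg13 +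
    ((r : ℝ) - 1) * (((r : ℝ) ^ 3 + 2 * (r : ℝ) ^ 2 - 2) * u ^ 2 +
        (r : ℝ) ^ 3 - 2 * (r : ℝ) ^ 2 + 2) /
      (2 * (r : ℝ) ^ 3 * Real.sqrt ξ1sq ^ 3) * Eg112

/-- `E_J[Γ_ℓ]` under schemes (J1) and (J3). -/
noncomputable def EJGammaL (r : ℕ) (ξ1sq : ℝ) (ξsq : ℕ → ℝ) (ℓ : ℕ) (u : ℝ) : ℝ :=
  -(hermiteEval (2 * ℓ - 1) u) / ((2 * ℓ).factorial : ℝ) *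
    (XiSum r ξsq / ((r : ℝ) ^ 2 * ξ1sq)) ^ ℓ

/-- the modified `M_α` under scheme (J1). -/
noncomputable def MalJ1 (r : ℕ) (α : ℝ) (n : ℕ) (ξsq : ℕ → ℝ) : ℝ :=
  (n : ℝ) ^ (α - 1) * (1 + 1 / ((r : ℝ) * (n : ℝ) ^ (α - 1))) /
    (1 + (n : ℝ) ^ (α - 2) * ξsq 2 * ((r : ℝ) * ((r : ℝ) - 1)) / XiSum r ξsq)

/-- the modified `M_α` under scheme (J3). -/
noncomputable def MalJ3 (r : ℕ) (α : ℝ) (n : ℕ) (ξsq : ℕ → ℝ) : ℝ :=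
  (n : ℝ) ^ (α - 1) * (1 + 1 / ((r : ℝ) * (n : ℝ) ^ (α - 1))) /
    (1 + (n : ℝ) ^ (α - 2) * ξsq 2 * ((r : ℝ) ^ 2 * ((r : ℝ) - 1)) / (2 * XiSum r ξsq))

/-- the simplified Edgeworth expansion of Corollary 2.2. -/
noncomputable def EdgeGrand (r : ℕ) (α : ℝ) (n : ℕ) (Γ0 : ℝ → ℝ) (ΓL : ℕ → ℝ → ℝ)
    (Mal : ℝ) (u : ℝ) : ℝ :=
  gcdf u + gpdf u * (Γ0 u / Real.sqrt n + ∑ ℓ ∈ Finset.Icc 1 (Lfl α), ΓL ℓ u / Mal ^ ℓ)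

/-! ### Network moments -/

instance : MeasurableSpace (Finset ℕ) := ⊤

/-- the edge set of a motif given by a boolean adjacency predicate. -/
def edgePairs {r : ℕ} (R : Fin r → Fin r → Bool) : Finset (Fin r × Fin r) :=
  Finset.univ.filter fun p => p.1 < p.2 ∧ (R p.1 p.2 || R p.2 p.1)

/-- the simple graph of a motif. -/
def motifGraph {r : ℕ} (R : Fin r → Fin r → Bool) : SimpleGraph (Fin r) :=
  SimpleGraph.fromRel fun a b => R a b = true

open Classical in
/-- graphon adjacency variables generated from latent positions `X` and edge noises `U`. -/
noncomputable def gAdj {Ω₁ Ω₂ : Type*} (f : ℝ → ℝ → ℝ) (ρ : ℝ) (X : ℕ → Ω₁ → ℝ)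
    (U : ℕ → ℕ → Ω₂ → ℝ) (i j : ℕ) (ω : Ω₁ × Ω₂) : ℝ :=
  if i = j then 0
  else if U (min i j) (max i j) ω.2 ≤ ρ * f (X i ω.1) (X j ω.1) then 1 else 0

open Classical in
/-- the motif-counting kernel `h(A_{I_r})`. -/
noncomputable def motifKer {Ω' : Type*} {r : ℕ} (R : Fin r → Fin r → Bool)
    (A : ℕ → ℕ → Ω' → ℝ) (I : Finset ℕ) (ω : Ω') : ℝ :=
  if hI : I.card = r then
    ∑ σ : Equiv.Perm (Fin r),
      if ∀ p ∈ edgePairs R,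
          A (I.orderEmbOfFin hI (σ p.1)) (I.orderEmbOfFin hI (σ p.2)) ω = 1
      then (1 : ℝ) else 0
  else 0

/-- the conditional (noiseless) motif kernel `E[h(A_{[1:r]}) | X]`. -/
noncomputable def motifCond {r : ℕ} (R : Fin r → Fin r → Bool) (f : ℝ → ℝ → ℝ) (ρ : ℝ)
    (x : Fin r → ℝ) : ℝ :=
  ∑ σ : Equiv.Perm (Fin r), ∏ p ∈ edgePairs R, ρ * f (x (σ p.1)) (x (σ p.2))

/-- `v_p`: maximal number of motif edges within a `p`-node subgraph. -/
def vmax {r : ℕ} (R : Fin r → Fin r → Bool) (p : ℕ) : ℕ :=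
  ((Finset.univ : Finset (Fin r)).powersetCard p).sup
    fun Sset => ((edgePairs R).filter fun q => q.1 ∈ Sset ∧ q.2 ∈ Sset).card

open Classical in
/-- the error rate `M̃_α(ρ_n, n, α; R)`. -/
noncomputable def Mtil {r : ℕ} (R : Fin r → Fin r → Bool) (ρ : ℝ) (n : ℕ) (α : ℝ) : ℝ :=
  (if r = 2 then ρ⁻¹ * (n : ℝ) ^ (-(α - 1))
   else (ρ ^ (-(((edgePairs R).card : ℝ) / 2)) * (n : ℝ) ^ (-((α - 1) / 2)) +
        ⨆ p ∈ Finset.Icc 3 (⌈α⌉₊ - 1),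
          ρ ^ (-((vmax R p : ℝ) / 2)) * (n : ℝ) ^ (-(((p : ℝ) - 1) / 2))) *
      Real.sqrt (Real.log n)) +
  (n : ℝ)⁻¹ * Real.log n ^ ((3 : ℝ) / 2) +
  (if (motifGraph R).IsAcyclic then (ρ * n)⁻¹ * Real.sqrt (Real.log n)
   else ρ ^ (-((r : ℝ) / 2)) * (n : ℝ)⁻¹ * Real.sqrt (Real.log n))

open Classical in
/-- the error rate `M̌_α(ρ_n, n, α; R)`: as `M̃_α` but with `n^{-(α-1)/2}` replaced by `n^{-α/2}`. -/
noncomputable def Mcheck {r : ℕ} (R : Fin r → Fin r → Bool) (ρ : ℝ) (n : ℕ) (α : ℝ) : ℝ :=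
  (if r = 2 then ρ⁻¹ * (n : ℝ) ^ (-(α - 1))
   else (ρ ^ (-(((edgePairs R).card : ℝ) / 2)) * (n : ℝ) ^ (-(α / 2)) +
        ⨆ p ∈ Finset.Icc 3 (⌈α⌉₊ - 1),
          ρ ^ (-((vmax R p : ℝ) / 2)) * (n : ℝ) ^ (-(((p : ℝ) - 1) / 2))) *
      Real.sqrt (Real.log n)) +
  (n : ℝ)⁻¹ * Real.log n ^ ((3 : ℝ) / 2) +
  (if (motifGraph R).IsAcyclic then (ρ * n)⁻¹ * Real.sqrt (Real.log n)
   else ρ ^ (-((r : ℝ) / 2)) * (n : ℝ)⁻¹ * Real.sqrt (Real.log n))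

/-- the node-average `â_i` of motif counts at design entries containing `i`. -/
noncomputable def hata {Ω' : Type*} {r : ℕ} (R : Fin r → Fin r → Bool)
    (A : ℕ → ℕ → Ω' → ℝ) (J : ι → Finset ℕ) (i : ℕ) (ω : Ω') : ℝ :=
  (acount J {i} : ℝ)⁻¹ * ∑ j ∈ Finset.univ.filter (fun j => i ∈ J j), motifKer R A (J j) ω

/-- the incomplete network moment `Û_J`. -/
noncomputable def UhatJ {Ω' : Type*} {r : ℕ} (R : Fin r → Fin r → Bool)
    (A : ℕ → ℕ → Ω' → ℝ) (J : ι → Finset ℕ) (ω : Ω') : ℝ :=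
  (Fintype.card ι : ℝ)⁻¹ * ∑ j, motifKer R A (J j) ω

/-- the network variance estimator `ξ̂₁²`. -/
noncomputable def xiHat1Sq {Ω' : Type*} {r : ℕ} (R : Fin r → Fin r → Bool)
    (A : ℕ → ℕ → Ω' → ℝ) (n : ℕ) (J : ι → Finset ℕ) (ω : Ω') : ℝ :=
  (r : ℝ)⁻¹ * (Fintype.card ι : ℝ)⁻¹ *
    ∑ i ∈ Finset.range n, (acount J {i} : ℝ) * (hata R A J i ω - UhatJ R A J ω) ^ 2

/-- the `t`-th smallest element of a finset of naturals (junk value `0` if out of range). -/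
noncomputable def elemAt (I : Finset ℕ) (t : ℕ) : ℕ :=
  if hT : t < I.card then (I.orderEmbOfFin rfl) ⟨t, hT⟩ else 0

/-- the network plug-in estimator `Ê[g₁³]`. -/
noncomputable def EhatG13 {Ω' : Type*} {r : ℕ} (R : Fin r → Fin r → Bool)
    (A : ℕ → ℕ → Ω' → ℝ) (n : ℕ) (J : ι → Finset ℕ) (ω : Ω') : ℝ :=
  (r : ℝ)⁻¹ * (Fintype.card ι : ℝ)⁻¹ *
    ∑ i ∈ Finset.range n, (acount J {i} : ℝ) * (hata R A J i ω - UhatJ R A J ω) ^ 3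

/-- the network plug-in estimator `Ê[g₁g₁g₂]`. -/
noncomputable def EhatG112 {Ω' : Type*} {r : ℕ} (R : Fin r → Fin r → Bool)
    (A : ℕ → ℕ → Ω' → ℝ) (J : ι → Finset ℕ) (ω : Ω') : ℝ :=
  (Fintype.card ι : ℝ)⁻¹ *
    ∑ j, (motifKer R A (J j) ω - UhatJ R A J ω) *
      (hata R A J (elemAt (J j) 0) ω - UhatJ R A J ω) *
      (hata R A J (elemAt (J j) 1) ω - UhatJ R A J ω)

/-- the network Edgeworth expansion (population or plug-in, depending on the arguments). -/
noncomputable def netEdgeG (r n : ℕ) (ξ1sq Eg13 Eg112 : ℝ) (u : ℝ) : ℝ :=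
  gcdf u + gpdf u / (Real.sqrt n * Real.sqrt ξ1sq ^ 3) *
    ((2 * u ^ 2 + 1) / 6 * Eg13 + ((r : ℝ) - 1) / 2 * (u ^ 2 + 1) * Eg112)

end UStat

open UStat


private lemma aux_pow_add_inj {a b a' b' : ℕ} (hab : a < b) (hab' : a' < b')
    (heq : 2 ^ b + 2 ^ a' = 2 ^ b' + 2 ^ a) : a = a' ∧ b = b' := by
  have hbb : b = b' := by
    by_contra hne
    rcases Nat.lt_or_ge b b' with h | h
    · have h1 : 2 ^ b ≤ 2 ^ (b' - 1) := Nat.pow_le_pow_right (by norm_num) (by omega)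
      have h2 : 2 ^ a' ≤ 2 ^ (b' - 1) := Nat.pow_le_pow_right (by norm_num) (by omega)
      have h3 : 2 ^ (b' - 1) * 2 = 2 ^ b' := by
        rw [← pow_succ]; congr 1; omega
      have h4 : 0 < 2 ^ a := Nat.two_pow_pos a
      omega
    · have h' : b' < b := by omega
      have h1 : 2 ^ b' ≤ 2 ^ (b - 1) := Nat.pow_le_pow_right (by norm_num) (by omega)
      have h2 : 2 ^ a ≤ 2 ^ (b - 1) := Nat.pow_le_pow_right (by norm_num) (by omega)
      have h3 : 2 ^ (b - 1) * 2 = 2 ^ b := by rw [← pow_succ]; congr 1; omega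
      have h4 : 0 < 2 ^ a' := Nat.two_pow_pos a'
      omega
  subst hbb
  have h5 : 2 ^ a' = 2 ^ a := by omega
  exact ⟨(Nat.pow_right_injective le_rfl h5).symm, rfl⟩

private lemma aux_ratio_contra {L V V' d d' : ℤ} (hV : 1 ≤ V) (hVV' : V + 1 ≤ V')
    (hV'L : V' ≤ L - 1) (hd : 1 ≤ d) (hd' : 1 ≤ d') (heq : V * d = V' * d')
    (hrat : (L - 1) * d < L * d') : False := by
  rcases le_or_gt d d' with h | h
  · have h1 : (V + 1) * d' ≤ V' * d' := mul_le_mul_of_nonneg_right hVV' (by linarith)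
    have h2 : (V + 1) * d ≤ (V + 1) * d' := mul_le_mul_of_nonneg_left h (by linarith)
    nlinarith
  · have h1 : V * d ≤ (V' - 1) * d := mul_le_mul_of_nonneg_right (by linarith) (by linarith)
    have h2 : (L - 1) * (d' - d) ≤ V' * (d' - d) :=
      mul_le_mul_of_nonpos_right (by linarith) (by linarith)
    nlinarith

private lemma aux_core {r : ℕ} {a b a' b' : ℕ} (hab : a < b) (hbr : b < r) (ha'r : a' < r)
    (hb'r : b' < r) (hne' : a' ≠ b') {d d' : ℤ} (hd : 1 ≤ d) (hd' : 1 ≤ d')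
    (hrat1 : ((2 : ℤ) ^ (r - 1) - 1) * d < 2 ^ (r - 1) * d')
    (hrat2 : ((2 : ℤ) ^ (r - 1) - 1) * d' < 2 ^ (r - 1) * d)
    (E : ((2 : ℤ) ^ b - 2 ^ a) * d = ((2 : ℤ) ^ b' - 2 ^ a') * d') :
    a = a' ∧ b = b' ∧ d = d' := by
  have h2 : (1 : ℤ) < 2 := one_lt_two
  have hVpos : (0 : ℤ) < 2 ^ b - 2 ^ a := by
    have := pow_lt_pow_right₀ h2 hab
    linarith
  have hV'pos : (0 : ℤ) < 2 ^ b' - 2 ^ a' := by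
    by_contra hcon
    push_neg at hcon
    nlinarith
  have ha'b' : a' < b' := by
    have hlt : (2 : ℤ) ^ a' < 2 ^ b' := by linarith
    exact (pow_lt_pow_iff_right₀ h2).mp hlt
  have hble : (2 : ℤ) ^ b ≤ 2 ^ (r - 1) := pow_le_pow_right₀ (by norm_num) (by omega)
  have hb'le : (2 : ℤ) ^ b' ≤ 2 ^ (r - 1) := pow_le_pow_right₀ (by norm_num) (by omega)
  have hap : (1 : ℤ) ≤ 2 ^ a := one_le_pow₀ (by norm_num)
  have ha'p : (1 : ℤ) ≤ 2 ^ a' := one_le_pow₀ (by norm_num)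
  have hVle : (2 : ℤ) ^ b - 2 ^ a ≤ 2 ^ (r - 1) - 1 := by linarith
  have hV'le : (2 : ℤ) ^ b' - 2 ^ a' ≤ 2 ^ (r - 1) - 1 := by linarith
  rcases lt_trichotomy ((2 : ℤ) ^ b - 2 ^ a) ((2 : ℤ) ^ b' - 2 ^ a') with hlt | heqV | hgt
  · exact absurd (aux_ratio_contra (by linarith) (by linarith) hV'le hd hd' E hrat1) (by simp)
  · have hd_eq : d = d' := by
      rw [heqV] at E
      exact mul_left_cancel₀ (ne_of_gt hV'pos) E
    have hZ : (2 : ℤ) ^ b + 2 ^ a' = 2 ^ b' + 2 ^ a := by linarith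
    have hnat : 2 ^ b + 2 ^ a' = 2 ^ b' + 2 ^ a := by exact_mod_cast hZ
    obtain ⟨h1, h2'⟩ := aux_pow_add_inj hab ha'b' hnat
    exact ⟨h1, h2', hd_eq⟩
  · exact absurd (aux_ratio_contra (by linarith) (by linarith) hVle hd' hd E.symm hrat2) (by simp)


lemma aux_mem_apDesign {r n : ℕ} {D : Finset ℕ} {p : Fin n × {d // d ∈ D}} {x : ℕ} :
    x ∈ apDesign r n D p ↔
      ∃ k : Fin r, ((p.1 : ℕ) + (2 ^ (k : ℕ) - 1) * (p.2 : ℕ)) % n = x := by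
  simp [apDesign]

lemma aux_entry_subset {r n : ℕ} (hn : 0 < n) {D : Finset ℕ} (p : Fin n × {d // d ∈ D}) :
    apDesign r n D p ⊆ Finset.range n := by
  intro x hx
  obtain ⟨k, hk⟩ := aux_mem_apDesign.mp hx
  simpa [Finset.mem_range, ← hk] using Nat.mod_lt _ hn

lemma aux_entry_inj {r n : ℕ} {D : Finset ℕ}
    (hd_pos : ∀ d ∈ D, 0 < d) (hd_small : ∀ d ∈ D, 2 * ((2 ^ (r - 1) - 1) * d) < n)
    (p : Fin n × {d // d ∈ D}) :
    Function.Injective (fun k : Fin r => ((p.1 : ℕ) + (2 ^ (k : ℕ) - 1) * (p.2 : ℕ)) % n) := by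
  intro k l hkl
  simp only at hkl
  have hd0 : 0 < (p.2 : ℕ) := hd_pos _ p.2.2
  have hb : ∀ m : Fin r, (2 ^ (m : ℕ) - 1) * (p.2 : ℕ) < n := by
    intro m
    have hm := m.isLt
    have h1 : (2 : ℕ) ^ (m : ℕ) ≤ 2 ^ (r - 1) := Nat.pow_le_pow_right (by norm_num) (by omega)
    have h2 := hd_small _ p.2.2
    have h3 := Nat.mul_le_mul_right (p.2 : ℕ) (show 2 ^ (m : ℕ) - 1 ≤ 2 ^ (r - 1) - 1 by omega)
    omega
  have hmod : ((2 ^ (k : ℕ) - 1) * (p.2 : ℕ)) % n = ((2 ^ (l : ℕ) - 1) * (p.2 : ℕ)) % n :=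
    Nat.ModEq.add_left_cancel' (p.1 : ℕ) hkl
  rw [Nat.mod_eq_of_lt (hb k), Nat.mod_eq_of_lt (hb l)] at hmod
  have h1 : (1 : ℕ) ≤ 2 ^ (k : ℕ) := Nat.one_le_two_pow
  have h2 : (1 : ℕ) ≤ 2 ^ (l : ℕ) := Nat.one_le_two_pow
  have h3 := Nat.eq_of_mul_eq_mul_right hd0 hmod
  exact Fin.ext (Nat.pow_right_injective le_rfl (show (2:ℕ)^(k:ℕ) = 2^(l:ℕ) by omega))

lemma aux_entry_card {r n : ℕ} {D : Finset ℕ}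
    (hd_pos : ∀ d ∈ D, 0 < d) (hd_small : ∀ d ∈ D, 2 * ((2 ^ (r - 1) - 1) * d) < n)
    (p : Fin n × {d // d ∈ D}) : (apDesign r n D p).card = r := by
  rw [apDesign, Finset.card_image_of_injective _ (aux_entry_inj hd_pos hd_small p),
    Finset.card_univ, Fintype.card_fin]

lemma aux_pair_unique {r n : ℕ} {D : Finset ℕ}
    (hd_pos : ∀ d ∈ D, 0 < d)
    (hd_small : ∀ d ∈ D, 2 * ((2 ^ (r - 1) - 1) * d) < n)
    (hd_rat : ∀ d ∈ D, ∀ d' ∈ D, (2 ^ (r - 1) - 1) * d < 2 ^ (r - 1) * d')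
    {x y : ℕ} (hxy : x ≠ y) (hx : x < n) (hy : y < n)
    {p q : Fin n × {d // d ∈ D}}
    (hxp : x ∈ apDesign r n D p) (hyp : y ∈ apDesign r n D p)
    (hxq : x ∈ apDesign r n D q) (hyq : y ∈ apDesign r n D q) : p = q := by
  obtain ⟨a, ha⟩ := aux_mem_apDesign.mp hxp
  obtain ⟨b, hbq⟩ := aux_mem_apDesign.mp hyp
  obtain ⟨a', ha'⟩ := aux_mem_apDesign.mp hxq
  obtain ⟨b', hb'⟩ := aux_mem_apDesign.mp hyq
  set i : ℕ := (p.1 : ℕ) with hi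
  set d : ℕ := (p.2 : ℕ) with hd
  set i' : ℕ := (q.1 : ℕ) with hi'
  set d' : ℕ := (q.2 : ℕ) with hd'
  have hd0 : 0 < d := hd_pos _ p.2.2
  have hd'0 : 0 < d' := hd_pos _ q.2.2
  -- s-values and their bounds
  have hsb : ∀ (k : Fin r) (e : ℕ), (2 ^ (k : ℕ) - 1) * e ≤ (2 ^ (r - 1) - 1) * e := by
    intro k e
    have hm := k.isLt
    have h1 : (2 : ℕ) ^ (k : ℕ) ≤ 2 ^ (r - 1) := Nat.pow_le_pow_right (by norm_num) (by omega)
    exact Nat.mul_le_mul_right e (by omega)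
  have hsmd : 2 * ((2 ^ (r - 1) - 1) * d) < n := hd_small d (by rw [hd]; exact p.2.2)
  have hsmd' : 2 * ((2 ^ (r - 1) - 1) * d') < n := hd_small d' (by rw [hd']; exact q.2.2)
  -- congruences
  have e1 : (i + (2 ^ (b : ℕ) - 1) * d) ≡ y [MOD n] := by
    show _ % n = _ % n
    rw [hbq, Nat.mod_eq_of_lt hy]
  have e2 : (i' + (2 ^ (a' : ℕ) - 1) * d') ≡ x [MOD n] := by
    show _ % n = _ % n
    rw [ha', Nat.mod_eq_of_lt hx]
  have e3 : (i' + (2 ^ (b' : ℕ) - 1) * d') ≡ y [MOD n] := by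
    show _ % n = _ % n
    rw [hb', Nat.mod_eq_of_lt hy]
  have e4 : (i + (2 ^ (a : ℕ) - 1) * d) ≡ x [MOD n] := by
    show _ % n = _ % n
    rw [ha, Nat.mod_eq_of_lt hx]
  have e5 : (i + (2 ^ (b : ℕ) - 1) * d) + (i' + (2 ^ (a' : ℕ) - 1) * d')
      ≡ (i + (2 ^ (a : ℕ) - 1) * d) + (i' + (2 ^ (b' : ℕ) - 1) * d') [MOD n] := by
    refine (e1.add e2).trans ?_
    have := (e4.add e3).symm
    rwa [Nat.add_comm x y] at this
  have e6 : ((2 ^ (b : ℕ) - 1) * d + (2 ^ (a' : ℕ) - 1) * d')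
      ≡ ((2 ^ (a : ℕ) - 1) * d + (2 ^ (b' : ℕ) - 1) * d') [MOD n] := by
    apply Nat.ModEq.add_left_cancel' (i + i')
    calc (i + i') + ((2 ^ (b : ℕ) - 1) * d + (2 ^ (a' : ℕ) - 1) * d')
        = (i + (2 ^ (b : ℕ) - 1) * d) + (i' + (2 ^ (a' : ℕ) - 1) * d') := by ring
      _ ≡ (i + (2 ^ (a : ℕ) - 1) * d) + (i' + (2 ^ (b' : ℕ) - 1) * d') [MOD n] := e5
      _ = (i + i') + ((2 ^ (a : ℕ) - 1) * d + (2 ^ (b' : ℕ) - 1) * d') := by ring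
  have e8 : (2 ^ (b : ℕ) - 1) * d + (2 ^ (a' : ℕ) - 1) * d'
      = (2 ^ (a : ℕ) - 1) * d + (2 ^ (b' : ℕ) - 1) * d' := by
    have hlt1 : (2 ^ (b : ℕ) - 1) * d + (2 ^ (a' : ℕ) - 1) * d' < n := by
      have := hsb b d; have := hsb a' d'; omega
    have hlt2 : (2 ^ (a : ℕ) - 1) * d + (2 ^ (b' : ℕ) - 1) * d' < n := by
      have := hsb a d; have := hsb b' d'; omega
    have h6 : _ % n = _ % n := e6
    rwa [Nat.mod_eq_of_lt hlt1, Nat.mod_eq_of_lt hlt2] at h6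
  -- cast to ℤ
  have cst : ∀ k e : ℕ, (((2 ^ k - 1) * e : ℕ) : ℤ) = ((2 : ℤ) ^ k - 1) * e := by
    intro k e
    rw [Nat.cast_mul, Nat.cast_sub Nat.one_le_two_pow]
    push_cast; ring
  have E0 : ((2 : ℤ) ^ (b : ℕ) - 1) * d + ((2 : ℤ) ^ (a' : ℕ) - 1) * d'
      = ((2 : ℤ) ^ (a : ℕ) - 1) * d + ((2 : ℤ) ^ (b' : ℕ) - 1) * d' := by
    have h := congrArg (Nat.cast (R := ℤ)) e8
    rwa [Nat.cast_add, Nat.cast_add, cst, cst, cst, cst] at h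
  have E : ((2 : ℤ) ^ (b : ℕ) - 2 ^ (a : ℕ)) * d
      = ((2 : ℤ) ^ (b' : ℕ) - 2 ^ (a' : ℕ)) * d' := by linear_combination E0
  -- distinctness of exponents
  have hab : (a : ℕ) ≠ (b : ℕ) := by
    intro h
    exact hxy (by rw [← ha, ← hbq, h])
  have ha'b'ne : (a' : ℕ) ≠ (b' : ℕ) := by
    intro h
    exact hxy (by rw [← ha', ← hb', h])
  have hdz : (1 : ℤ) ≤ (d : ℤ) := by exact_mod_cast hd0
  have hd'z : (1 : ℤ) ≤ (d' : ℤ) := by exact_mod_cast hd'0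
  have hratZ : ∀ u v : ℕ, u ∈ D → v ∈ D →
      ((2 : ℤ) ^ (r - 1) - 1) * u < 2 ^ (r - 1) * v := by
    intro u v hu hv
    have h := hd_rat u hu v hv
    have h2 := (Nat.cast_lt (α := ℤ)).mpr h
    rwa [cst, Nat.cast_mul, Nat.cast_pow, Nat.cast_ofNat] at h2
  have hrat1 := hratZ d d' p.2.2 q.2.2
  have hrat2 := hratZ d' d q.2.2 p.2.2
  -- apply the core lemma
  have key : (a : ℕ) = (a' : ℕ) ∧ (b : ℕ) = (b' : ℕ) ∧ (d : ℤ) = (d' : ℤ) := by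
    rcases Nat.lt_or_ge (a : ℕ) (b : ℕ) with hlt | hge
    · exact aux_core hlt b.isLt a'.isLt b'.isLt ha'b'ne hdz hd'z hrat1 hrat2 E
    · have hlt' : (b : ℕ) < (a : ℕ) := by omega
      have E' : ((2 : ℤ) ^ (a : ℕ) - 2 ^ (b : ℕ)) * d
          = ((2 : ℤ) ^ (a' : ℕ) - 2 ^ (b' : ℕ)) * d' := by linear_combination (-1 : ℤ) * E
      obtain ⟨h1, h2, h3⟩ :=
        aux_core hlt' a.isLt b'.isLt a'.isLt (Ne.symm ha'b'ne) hdz hd'z hrat1 hrat2 E'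
      exact ⟨h2, h1, h3⟩
  obtain ⟨haa, hbb, hddz⟩ := key
  have hddn : d = d' := by exact_mod_cast hddz
  -- recover equality of starting points
  have e9 : i ≡ i' [MOD n] := by
    apply Nat.ModEq.add_right_cancel' ((2 ^ (a : ℕ) - 1) * d)
    refine e4.trans ?_
    rw [haa, hddn] at *
    exact e2.symm
  have hii : i = i' := by
    have h : i % n = i' % n := e9
    rwa [Nat.mod_eq_of_lt p.1.isLt, Nat.mod_eq_of_lt q.1.isLt] at h
  have hp1 : p.1 = q.1 := Fin.ext hii
  have hp2 : p.2 = q.2 := Subtype.ext hddn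
  exact Prod.ext hp1 hp2

lemma aux_acount_lower {r n : ℕ} (hr : 0 < r) {D : Finset ℕ} {i : ℕ} (hi : i < n) :
    D.card ≤ acount (apDesign r n D) {i} := by
  classical
  unfold acount
  have hmaps : ∀ dd : {d // d ∈ D}, dd ∈ (Finset.univ : Finset {d // d ∈ D}) →
      ((⟨i, hi⟩ : Fin n), dd) ∈
        Finset.univ.filter (fun j => ({i} : Finset ℕ) ⊆ apDesign r n D j) := by
    intro dd _
    simp only [Finset.mem_filter, Finset.mem_univ, true_and, Finset.singleton_subset_iff]
    refine aux_mem_apDesign.mpr ⟨⟨0, hr⟩, ?_⟩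
    show (i + (2 ^ (0 : ℕ) - 1) * (dd : ℕ)) % n = i
    norm_num [Nat.mod_eq_of_lt hi]
  have hinj : Set.InjOn (fun dd : {d // d ∈ D} => ((⟨i, hi⟩ : Fin n), dd))
      (Finset.univ : Finset {d // d ∈ D}) := by
    intro a _ b _ h
    exact congrArg Prod.snd h
  have := Finset.card_le_card_of_injOn _ hmaps hinj
  simpa [Finset.card_univ, Fintype.card_coe] using this

lemma aux_acount_upper {r n : ℕ} (hr : 0 < r) {D : Finset ℕ} (i : ℕ) :
    acount (apDesign r n D) {i} ≤ r * D.card := by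
  classical
  unfold acount
  set f : Fin n × {d // d ∈ D} → Fin r × {d // d ∈ D} := fun p =>
    (if h : ∃ k : Fin r, ((p.1 : ℕ) + (2 ^ (k : ℕ) - 1) * (p.2 : ℕ)) % n = i then h.choose
      else ⟨0, hr⟩, p.2) with hf
  have hmaps : ∀ p ∈ Finset.univ.filter (fun j => ({i} : Finset ℕ) ⊆ apDesign r n D j),
      f p ∈ (Finset.univ : Finset (Fin r × {d // d ∈ D})) := fun _ _ => Finset.mem_univ _
  have hinj : Set.InjOn f
      (Finset.univ.filter (fun j => ({i} : Finset ℕ) ⊆ apDesign r n D j)) := by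
    intro p hp q hq hfq
    simp only [Finset.coe_filter, Set.mem_setOf_eq, Finset.mem_univ, true_and,
      Finset.singleton_subset_iff] at hp hq
    have hep : ∃ k : Fin r, ((p.1 : ℕ) + (2 ^ (k : ℕ) - 1) * (p.2 : ℕ)) % n = i :=
      aux_mem_apDesign.mp hp
    have heq' : ∃ k : Fin r, ((q.1 : ℕ) + (2 ^ (k : ℕ) - 1) * (q.2 : ℕ)) % n = i :=
      aux_mem_apDesign.mp hq
    have h1 := congrArg Prod.fst hfq
    have h2 := congrArg Prod.snd hfq
    simp only [hf] at h1 h2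
    rw [dif_pos hep, dif_pos heq'] at h1
    have sp := hep.choose_spec
    have sq := heq'.choose_spec
    rw [← h1] at sq
    have hdq : (p.2 : ℕ) = (q.2 : ℕ) := congrArg Subtype.val h2
    rw [← hdq] at sq
    have hmod : (p.1 : ℕ) % n = (q.1 : ℕ) % n :=
      Nat.ModEq.add_right_cancel' _ (sp.trans sq.symm : _ % n = _ % n)
    have hp1 : p.1 = q.1 := Fin.ext
      (by rwa [Nat.mod_eq_of_lt p.1.isLt, Nat.mod_eq_of_lt q.1.isLt] at hmod)
    exact Prod.ext hp1 h2
  have := Finset.card_le_card_of_injOn f hmaps hinj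
  simpa [Finset.card_univ, Fintype.card_prod, Fintype.card_fin, Fintype.card_coe] using this

lemma aux_sum_eq {r n k : ℕ} (hn : 0 < n) {D : Finset ℕ}
    (hd_pos : ∀ d ∈ D, 0 < d) (hd_small : ∀ d ∈ D, 2 * ((2 ^ (r - 1) - 1) * d) < n) :
    ∑ I ∈ (Finset.range n).powersetCard k, acount (apDesign r n D) I
      = n * D.card * r.choose k := by
  classical
  have h1 : ∀ I : Finset ℕ, acount (apDesign r n D) I =
      ∑ p : Fin n × {d // d ∈ D}, if I ⊆ apDesign r n D p then 1 else 0 := by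
    intro I; unfold acount; rw [Finset.card_filter]
  simp only [h1]
  rw [Finset.sum_comm]
  have h2 : ∀ p : Fin n × {d // d ∈ D},
      (∑ I ∈ (Finset.range n).powersetCard k, if I ⊆ apDesign r n D p then 1 else 0)
        = r.choose k := by
    intro p
    have h3 : ((Finset.range n).powersetCard k).filter (· ⊆ apDesign r n D p)
        = (apDesign r n D p).powersetCard k := by
      ext I
      simp only [Finset.mem_filter, Finset.mem_powersetCard]
      constructor
      · rintro ⟨⟨-, hk⟩, hsub⟩; exact ⟨hsub, hk⟩
      · rintro ⟨hsub, hk⟩; exact ⟨⟨hsub.trans (aux_entry_subset hn p), hk⟩, hsub⟩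
    rw [← Finset.card_filter, h3, Finset.card_powersetCard,
      aux_entry_card hd_pos hd_small p]
  rw [Finset.sum_congr rfl fun p _ => h2 p, Finset.sum_const, Finset.card_univ,
    Fintype.card_prod, Fintype.card_fin, Fintype.card_coe, smul_eq_mul]

set_option maxHeartbeats 1600000 in

/-- Lemma 2.2: properties of the deterministic
arithmetic-progression design. -/
theorem statement_5
    (r : ℕ) (hr : 2 ≤ r) (α : ℝ) (hα : 1 < α ∧ α < 2)
    (b₁ b₂ : ℝ) (hb : 0 < b₁ ∧ b₁ < b₂)
    (hratio : ((2 : ℝ) ^ (r - 1) - 1) / 2 ^ (r - 1) < b₁ / b₂ ∧ b₁ / b₂ < 1) :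
    ∃ c C : ℝ, 0 < c ∧ c ≤ C ∧
      ∀ᶠ n : ℕ in Filter.atTop,
        (∀ i ∈ Finset.range n,
            c * (mfl α n : ℝ) ≤ (acount (apDesign r n (Drange α b₁ b₂ n)) {i} : ℝ) ∧
            (acount (apDesign r n (Drange α b₁ b₂ n)) {i} : ℝ) ≤ C * (mfl α n : ℝ)) ∧
          (∀ k ∈ Finset.Icc 2 r, ∀ I ∈ (Finset.range n).powersetCard k,
            acount (apDesign r n (Drange α b₁ b₂ n)) I ≤ 1) ∧
          ∀ k ∈ Finset.Icc 1 r,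
            c * (n : ℝ) ^ (α + max (α - k) 0) ≤
                (∑ I ∈ (Finset.range n).powersetCard k,
                  (acount (apDesign r n (Drange α b₁ b₂ n)) I : ℝ) ^ 2) ∧
              (∑ I ∈ (Finset.range n).powersetCard k,
                  (acount (apDesign r n (Drange α b₁ b₂ n)) I : ℝ) ^ 2) ≤
                C * (n : ℝ) ^ (α + max (α - k) 0) := by
  obtain ⟨hα1, hα2⟩ := hα
  obtain ⟨hb₁, hb₁₂⟩ := hb
  have hb₂ : 0 < b₂ := lt_trans hb₁ hb₁₂
  set β : ℝ := b₂ - b₁ with hβdef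
  have hβ0 : 0 < β := by simp only [hβdef]; linarith
  have hrR : (2 : ℝ) ≤ (r : ℝ) := by exact_mod_cast hr
  have hr0 : 0 < r := by omega
  set c₁ : ℝ := β / 2 with hc₁
  set C₁ : ℝ := (r : ℝ) * (β + 1) with hC₁
  refine ⟨min c₁ (min (c₁ ^ 2 / 4) (β / 4)), max C₁ (max (C₁ ^ 2) ((β + 1) * 2 ^ r)),
    lt_min (by linarith) (lt_min (div_pos (pow_pos (by linarith) 2) (by norm_num))
      (by linarith)), ?_, ?_⟩
  · calc min c₁ (min (c₁ ^ 2 / 4) (β / 4)) ≤ c₁ := min_le_left _ _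
      _ ≤ C₁ := by rw [hc₁, hC₁]; nlinarith
      _ ≤ _ := le_max_left _ _
  -- eventual facts
  have htop : Filter.Tendsto (fun n : ℕ => (n : ℝ) ^ (α - 1)) Filter.atTop Filter.atTop :=
    (tendsto_rpow_atTop (by linarith)).comp tendsto_natCast_atTop_atTop
  have ev1 := htop.eventually_ge_atTop (2 + (4 / β + 1))
  have hK : Filter.Tendsto (fun n : ℕ => 2 * 2 ^ (r - 1) * b₂ * (n : ℝ) ^ (α - 2))
      Filter.atTop (nhds 0) := by
    have h0 : Filter.Tendsto (fun x : ℝ => x ^ (α - 2)) Filter.atTop (nhds 0) := by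
      have h := tendsto_rpow_neg_atTop (y := 2 - α) (by linarith)
      simpa [show -(2 - α) = α - 2 by ring] using h
    have h1 := (h0.comp tendsto_natCast_atTop_atTop).const_mul (2 * 2 ^ (r - 1) * b₂)
    simpa [Function.comp] using h1
  have ev2 := hK.eventually_lt_const (by norm_num : (0 : ℝ) < 1)
  have ev3 : ∀ᶠ n : ℕ in Filter.atTop, 2 ≤ n := Filter.eventually_ge_atTop 2
  filter_upwards [ev1, ev2, ev3] with n hKb hsm hn2
  -- basic quantities
  have hn0 : 0 < n := by omega
  set N : ℝ := (n : ℝ) with hNdef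
  have hN0 : (0 : ℝ) < N := by rw [hNdef]; exact_mod_cast hn0
  have hNa0 : (0 : ℝ) ≤ N ^ (α - 1) := Real.rpow_nonneg hN0.le _
  set M : ℕ := mfl α n with hMdef
  set Mr : ℝ := (M : ℝ) with hMrdef
  have hMfloor : M = ⌊N ^ (α - 1)⌋₊ := rfl
  have hMle : Mr ≤ N ^ (α - 1) := by rw [hMrdef, hMfloor]; exact Nat.floor_le hNa0
  have hMgt : N ^ (α - 1) - 1 ≤ Mr := by
    rw [hMrdef, hMfloor]
    have := Nat.lt_floor_add_one (N ^ (α - 1))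
    linarith
  have h4βnn : (0 : ℝ) ≤ 4 / β := div_nonneg (by norm_num) hβ0.le
  have hM1 : (1 : ℝ) ≤ Mr := by linarith
  have hM2 : N ^ (α - 1) ≤ 2 * Mr := by linarith
  have hβM : 4 ≤ β * Mr := by
    have h4β : β * (4 / β) = 4 := by field_simp
    have h1 : 4 / β ≤ Mr := by linarith
    calc (4 : ℝ) = β * (4 / β) := h4β.symm
      _ ≤ β * Mr := mul_le_mul_of_nonneg_left h1 hβ0.le
  -- the design gap range
  set D : Finset ℕ := Drange α b₁ b₂ n with hDdef
  set a₀ : ℕ := ⌈b₁ * Mr⌉₊ with ha₀def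
  set b₀ : ℕ := ⌊b₂ * Mr⌋₊ with hb₀def
  have hDIcc : D = Finset.Icc a₀ b₀ := rfl
  clear_value M D
  have hb₁M : 0 < b₁ * Mr := mul_pos hb₁ (by linarith)
  have ha₀l : b₁ * Mr ≤ (a₀ : ℝ) := Nat.le_ceil _
  have ha₀u : (a₀ : ℝ) < b₁ * Mr + 1 := Nat.ceil_lt_add_one hb₁M.le
  have hb₀u : (b₀ : ℝ) ≤ b₂ * Mr := Nat.floor_le (mul_nonneg hb₂.le (by linarith))
  have hb₀l : b₂ * Mr < (b₀ : ℝ) + 1 := Nat.lt_floor_add_one _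
  have hb₂M : b₂ * Mr = b₁ * Mr + β * Mr := by rw [hβdef]; ring
  have hab : a₀ ≤ b₀ := by
    have h : (a₀ : ℝ) ≤ (b₀ : ℝ) := by linarith
    exact_mod_cast h
  have hDcard : (D.card : ℝ) = (b₀ : ℝ) + 1 - (a₀ : ℝ) := by
    rw [hDIcc, Nat.card_Icc, Nat.cast_sub (by omega)]
    push_cast; ring
  have hDlow : β / 2 * Mr ≤ (D.card : ℝ) := by linarith
  have hDhigh : (D.card : ℝ) ≤ (β + 1) * Mr := by linarith
  have hmem : ∀ d ∈ D, b₁ * Mr ≤ (d : ℝ) ∧ (d : ℝ) ≤ b₂ * Mr := by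
    intro d hd
    rw [hDIcc, Finset.mem_Icc] at hd
    constructor
    · calc b₁ * Mr ≤ (a₀ : ℝ) := ha₀l
        _ ≤ (d : ℝ) := by exact_mod_cast hd.1
    · calc (d : ℝ) ≤ (b₀ : ℝ) := by exact_mod_cast hd.2
        _ ≤ b₂ * Mr := hb₀u
  have hd_pos : ∀ d ∈ D, 0 < d := by
    intro d hd
    rcases Nat.eq_zero_or_pos d with h | h
    · exfalso
      have h2 := (hmem d hd).1
      rw [h] at h2
      simp only [Nat.cast_zero] at h2
      linarith
    · exact h
  -- the real constant L
  set L : ℝ := 2 ^ (r - 1) with hL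
  have hL2 : (2 : ℝ) ≤ L := by
    rw [hL]
    calc (2 : ℝ) = 2 ^ 1 := (pow_one 2).symm
      _ ≤ 2 ^ (r - 1) := pow_le_pow_right₀ one_le_two (by omega)
  have hLb : (L - 1) * b₂ < b₁ * L := by
    have h := hratio.1
    rwa [div_lt_div_iff₀ (by linarith) hb₂] at h
  have hNid : N ^ (α - 1) = N ^ (α - 2) * N := by
    rw [show α - 1 = (α - 2) + 1 by ring, Real.rpow_add_one hN0.ne']
  have hsm' : 2 * L * b₂ * N ^ (α - 1) < N := by
    calc 2 * L * b₂ * N ^ (α - 1) = (2 * L * b₂ * N ^ (α - 2)) * N := by rw [hNid]; ring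
      _ < 1 * N := mul_lt_mul_of_pos_right hsm hN0
      _ = N := one_mul N
  have hd_small : ∀ d ∈ D, 2 * ((2 ^ (r - 1) - 1) * d) < n := by
    intro d hd
    have h1 := (hmem d hd).2
    have hreal : 2 * ((L - 1) * (d : ℝ)) < N := by
      have hA : (L - 1) * (d : ℝ) ≤ (L - 1) * (b₂ * Mr) :=
        mul_le_mul_of_nonneg_left h1 (by linarith)
      have hB : (L - 1) * (b₂ * Mr) ≤ L * (b₂ * Mr) :=
        mul_le_mul_of_nonneg_right (by linarith)
          (mul_nonneg hb₂.le (by linarith))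
      have hC : 2 * L * b₂ * Mr ≤ 2 * L * b₂ * N ^ (α - 1) :=
        mul_le_mul_of_nonneg_left hMle
          (mul_nonneg (mul_nonneg (by norm_num) (by linarith : (0:ℝ) ≤ L)) hb₂.le)
      linarith
    have hcast : ((2 * ((2 ^ (r - 1) - 1) * d) : ℕ) : ℝ) = 2 * ((L - 1) * (d : ℝ)) := by
      rw [Nat.cast_mul, Nat.cast_mul, Nat.cast_sub Nat.one_le_two_pow, hL]
      push_cast; ring
    have hfin : ((2 * ((2 ^ (r - 1) - 1) * d) : ℕ) : ℝ) < (n : ℝ) := by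
      rw [hcast]; exact hreal
    exact_mod_cast hfin
  have hd_rat : ∀ d ∈ D, ∀ d' ∈ D, (2 ^ (r - 1) - 1) * d < 2 ^ (r - 1) * d' := by
    intro d hd d' hd'
    have h1 := (hmem d hd).2
    have h2 := (hmem d' hd').1
    have hreal : (L - 1) * (d : ℝ) < L * (d' : ℝ) := by
      have hA : (L - 1) * (d : ℝ) ≤ (L - 1) * (b₂ * Mr) :=
        mul_le_mul_of_nonneg_left h1 (by linarith)
      have hC : ((L - 1) * b₂) * Mr < (b₁ * L) * Mr :=
        mul_lt_mul_of_pos_right hLb (by linarith)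
      have hE : L * (b₁ * Mr) ≤ L * (d' : ℝ) := mul_le_mul_of_nonneg_left h2 (by linarith)
      linarith
    have hcastl : (((2 ^ (r - 1) - 1) * d : ℕ) : ℝ) = (L - 1) * (d : ℝ) := by
      rw [Nat.cast_mul, Nat.cast_sub Nat.one_le_two_pow, hL]; push_cast; ring
    have hcastr : ((2 ^ (r - 1) * d' : ℕ) : ℝ) = L * (d' : ℝ) := by
      rw [Nat.cast_mul, hL]; push_cast; ring
    have hfin : (((2 ^ (r - 1) - 1) * d : ℕ) : ℝ) < ((2 ^ (r - 1) * d' : ℕ) : ℝ) := by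
      rw [hcastl, hcastr]; exact hreal
    exact_mod_cast hfin
  -- part (ii)
  have part2 : ∀ k ∈ Finset.Icc 2 r, ∀ I ∈ (Finset.range n).powersetCard k,
      acount (apDesign r n D) I ≤ 1 := by
    intro k hk I hI
    rw [Finset.mem_powersetCard] at hI
    obtain ⟨hIsub, hIcard⟩ := hI
    rw [Finset.mem_Icc] at hk
    obtain ⟨x, hxI, y, hyI, hxyne⟩ := Finset.one_lt_card.mp
      (show 1 < I.card by omega)
    unfold acount
    apply Finset.card_le_one.mpr
    intro p hp q hq
    rw [Finset.mem_filter] at hp hq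
    exact aux_pair_unique hd_pos hd_small hd_rat hxyne
      (Finset.mem_range.mp (hIsub hxI)) (Finset.mem_range.mp (hIsub hyI))
      (hp.2 hxI) (hp.2 hyI) (hq.2 hxI) (hq.2 hyI)
  -- part (i) pointwise bounds
  have part1 : ∀ i ∈ Finset.range n,
      c₁ * Mr ≤ (acount (apDesign r n D) {i} : ℝ) ∧
      (acount (apDesign r n D) {i} : ℝ) ≤ C₁ * Mr := by
    intro i hi
    have hi' := Finset.mem_range.mp hi
    constructor
    · calc c₁ * Mr = β / 2 * Mr := by rw [hc₁]
        _ ≤ (D.card : ℝ) := hDlow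
        _ ≤ _ := by exact_mod_cast aux_acount_lower hr0 hi'
    · calc (acount (apDesign r n D) {i} : ℝ)
            ≤ ((r * D.card : ℕ) : ℝ) := by exact_mod_cast aux_acount_upper hr0 i
        _ = (r : ℝ) * (D.card : ℝ) := by push_cast; ring
        _ ≤ (r : ℝ) * ((β + 1) * Mr) :=
          mul_le_mul_of_nonneg_left hDhigh (by positivity)
        _ = C₁ * Mr := by rw [hC₁]; ring
  refine ⟨?_, part2, ?_⟩
  · intro i hi
    obtain ⟨hlo, hhi⟩ := part1 i hi
    have hMr0 : (0 : ℝ) ≤ Mr := by linarith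
    constructor
    · calc min c₁ (min (c₁ ^ 2 / 4) (β / 4)) * Mr ≤ c₁ * Mr :=
          mul_le_mul_of_nonneg_right (min_le_left _ _) hMr0
        _ ≤ _ := hlo
    · calc (acount (apDesign r n D) {i} : ℝ) ≤ C₁ * Mr := hhi
        _ ≤ max C₁ (max (C₁ ^ 2) ((β + 1) * 2 ^ r)) * Mr :=
          mul_le_mul_of_nonneg_right (le_max_left _ _) hMr0
  · intro k hk
    rw [Finset.mem_Icc] at hk
    by_cases hk1 : k = 1
    · subst hk1
      simp only [Nat.cast_one]
      rw [max_eq_left (by linarith : (0 : ℝ) ≤ α - 1)]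
      rw [Finset.powersetCard_one, Finset.sum_map]
      simp only [Function.Embedding.coeFn_mk]
      have hidd : N ^ (α + (α - 1)) = N * (N ^ (α - 1) * N ^ (α - 1)) := by
        rw [show α + (α - 1) = 1 + (α - 1) + (α - 1) by ring, Real.rpow_add hN0,
          Real.rpow_add hN0, Real.rpow_one]
        ring
      have hMr0 : (0 : ℝ) ≤ Mr := by linarith
      have hc₁0 : (0 : ℝ) ≤ c₁ := by rw [hc₁]; linarith
      have hC₁0 : (0 : ℝ) ≤ C₁ := by
        rw [hC₁]; exact mul_nonneg (Nat.cast_nonneg r) (by linarith)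
      have hSlow : N * (c₁ * Mr) ^ 2 ≤
          ∑ i ∈ Finset.range n, (acount (apDesign r n D) {i} : ℝ) ^ 2 := by
        have h := Finset.card_nsmul_le_sum (Finset.range n)
          (fun i => (acount (apDesign r n D) {i} : ℝ) ^ 2) ((c₁ * Mr) ^ 2)
          (fun i hi => pow_le_pow_left₀ (mul_nonneg hc₁0 hMr0) (part1 i hi).1 2)
        simpa [Finset.card_range, nsmul_eq_mul, hNdef] using h
      have hShigh : (∑ i ∈ Finset.range n, (acount (apDesign r n D) {i} : ℝ) ^ 2)
          ≤ N * (C₁ * Mr) ^ 2 := by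
        have h := Finset.sum_le_card_nsmul (Finset.range n)
          (fun i => (acount (apDesign r n D) {i} : ℝ) ^ 2) ((C₁ * Mr) ^ 2)
          (fun i hi => pow_le_pow_left₀ (Nat.cast_nonneg _) (part1 i hi).2 2)
        simpa [Finset.card_range, nsmul_eq_mul, hNdef] using h
      constructor
      · calc min c₁ (min (c₁ ^ 2 / 4) (β / 4)) * N ^ (α + (α - 1))
            ≤ c₁ ^ 2 / 4 * N ^ (α + (α - 1)) :=
            mul_le_mul_of_nonneg_right (le_trans (min_le_right _ _) (min_le_left _ _))
              (Real.rpow_nonneg hN0.le _)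
          _ = c₁ ^ 2 / 4 * (N * (N ^ (α - 1) * N ^ (α - 1))) := by rw [hidd]
          _ ≤ c₁ ^ 2 / 4 * (N * ((2 * Mr) * (2 * Mr))) :=
            mul_le_mul_of_nonneg_left
              (mul_le_mul_of_nonneg_left
                (mul_le_mul hM2 hM2 hNa0 (by linarith)) hN0.le)
              (by positivity)
          _ = N * (c₁ * Mr) ^ 2 := by ring
          _ ≤ _ := hSlow
      · calc (∑ i ∈ Finset.range n, (acount (apDesign r n D) {i} : ℝ) ^ 2)
            ≤ N * (C₁ * Mr) ^ 2 := hShigh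
          _ ≤ N * (C₁ * N ^ (α - 1)) ^ 2 :=
            mul_le_mul_of_nonneg_left
              (pow_le_pow_left₀ (mul_nonneg hC₁0 hMr0)
                (mul_le_mul_of_nonneg_left hMle hC₁0) 2) hN0.le
          _ = C₁ ^ 2 * N ^ (α + (α - 1)) := by rw [hidd]; ring
          _ ≤ max C₁ (max (C₁ ^ 2) ((β + 1) * 2 ^ r)) * N ^ (α + (α - 1)) :=
            mul_le_mul_of_nonneg_right
              (le_trans (le_max_left _ _) (le_max_right _ _))
              (Real.rpow_nonneg hN0.le _)
    · have hk2 : 2 ≤ k := by omega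
      have hkR : (2 : ℝ) ≤ (k : ℝ) := by exact_mod_cast hk2
      rw [max_eq_right (by linarith : α - (k : ℝ) ≤ 0), add_zero]
      have hNα : N ^ α = N * N ^ (α - 1) := by
        have h := Real.rpow_add hN0 1 (α - 1)
        rw [show (1 : ℝ) + (α - 1) = α by ring, Real.rpow_one] at h
        exact h
      have hSval : (∑ I ∈ (Finset.range n).powersetCard k,
          (acount (apDesign r n D) I : ℝ) ^ 2)
          = N * (D.card : ℝ) * (r.choose k : ℝ) := by
        have hsq : ∀ I ∈ (Finset.range n).powersetCard k,
            ((acount (apDesign r n D) I : ℝ)) ^ 2 = (acount (apDesign r n D) I : ℝ) := by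
          intro I hI
          rcases Nat.le_one_iff_eq_zero_or_eq_one.mp
            (part2 k (Finset.mem_Icc.mpr ⟨hk2, hk.2⟩) I hI) with h | h <;>
            rw [h] <;> norm_num
        rw [Finset.sum_congr rfl hsq, ← Nat.cast_sum,
          aux_sum_eq hn0 hd_pos hd_small]
        push_cast [hNdef]; ring
      rw [hSval]
      have hch1 : (1 : ℝ) ≤ (r.choose k : ℝ) := by
        exact_mod_cast Nat.succ_le_of_lt (Nat.choose_pos hk.2)
      have hch2 : (r.choose k : ℝ) ≤ 2 ^ r := by
        have h : r.choose k ≤ 2 ^ r := by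
          calc r.choose k ≤ ∑ i ∈ Finset.range (r + 1), r.choose i :=
              Finset.single_le_sum (fun _ _ => Nat.zero_le _)
                (Finset.mem_range.mpr (by omega))
            _ = 2 ^ r := Nat.sum_range_choose r
        exact_mod_cast h
      have hMr0 : (0 : ℝ) ≤ Mr := by linarith
      constructor
      · calc min c₁ (min (c₁ ^ 2 / 4) (β / 4)) * N ^ α ≤ β / 4 * N ^ α :=
            mul_le_mul_of_nonneg_right (le_trans (min_le_right _ _) (min_le_right _ _))
              (Real.rpow_nonneg hN0.le _)
          _ = β / 4 * (N * N ^ (α - 1)) := by rw [hNα]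
          _ ≤ β / 4 * (N * (2 * Mr)) :=
            mul_le_mul_of_nonneg_left
              (mul_le_mul_of_nonneg_left hM2 hN0.le)
              (by linarith : (0 : ℝ) ≤ β / 4)
          _ = N * (β / 2 * Mr) * 1 := by ring
          _ ≤ N * (D.card : ℝ) * (r.choose k : ℝ) :=
            mul_le_mul (mul_le_mul_of_nonneg_left hDlow hN0.le) hch1 zero_le_one
              (mul_nonneg hN0.le (Nat.cast_nonneg _))
      · calc N * (D.card : ℝ) * (r.choose k : ℝ) ≤ N * ((β + 1) * Mr) * 2 ^ r :=
            mul_le_mul (mul_le_mul_of_nonneg_left hDhigh hN0.le) hch2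
              (Nat.cast_nonneg _)
              (mul_nonneg hN0.le (mul_nonneg (by linarith) (by linarith)))
          _ ≤ N * ((β + 1) * N ^ (α - 1)) * 2 ^ r :=
            mul_le_mul_of_nonneg_right
              (mul_le_mul_of_nonneg_left
                (mul_le_mul_of_nonneg_left hMle (by linarith)) hN0.le)
              (by positivity)
          _ = ((β + 1) * 2 ^ r) * N ^ α := by rw [hNα]; ring
          _ ≤ max C₁ (max (C₁ ^ 2) ((β + 1) * 2 ^ r)) * N ^ α :=
            mul_le_mul_of_nonneg_right
              (le_trans (le_max_right _ _) (le_max_right _ _))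
              (Real.rpow_nonneg hN0.le _)
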